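/- Let b < t be real numbers and let t_1, t_2 be vertices of height t and b_1, b_2 be vertices of height b, with t_1 placed to the left of t_2 and b_1 placed to the left of b_2. Let r be a path from t_1 to b_2 and g be a vertex-disjoint path from b_1 to t_2 such that every interior vertex v of r and of g satisfies b < h(v) < t. Then the Reeb graph consisting of the two paths r and g admits a drawing, respecting these endpoint placements, with exactly one crossing (and any such drawing has at least one crossing). -/

import Mathlib

open Set

/-- A drawing of a Reeb graph `(G, h)`: every vertex `v` is placed at the point
`(x v, h v)` in the plane (distinct vertices at distinct points), and every edge
`{v, w}` of `G` is drawn as the graph of a continuous function of the `y`-coordinate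
over the height interval of its two endpoints; such a curve is a continuous
`y`-monotone curve joining the images of the endpoints (it meets every horizontal
line in at most one point). -/
structure ReebDrawing {V : Type*} (G : SimpleGraph V) (h : V → ℝ) where
  /-- the `x`-coordinate of each vertex -/
  x : V → ℝ
  /-- distinct vertices are mapped to distinct points -/
  inj : Function.Injective fun v => ((x v, h v) : ℝ × ℝ)
  /-- for each edge, the `x`-coordinate of its curve as a function of the height `y` -/
  curve : Sym2 V → ℝ → ℝ
  curve_cont : ∀ e ∈ G.edgeSet, Continuous (curve e)
  curve_end : ∀ v w : V, G.Adj v w → curve s(v, w) (h v) = x v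

namespace ReebDrawing

variable {V : Type*} {G : SimpleGraph V} {h : V → ℝ}

/-- The point of the plane where the vertex `v` is drawn. -/
def pos (D : ReebDrawing G h) (v : V) : ℝ × ℝ := (D.x v, h v)

/-- The set of points of the curve drawn for the edge `{v, w}`. -/
def edgeCurve (D : ReebDrawing G h) (v w : V) : Set (ℝ × ℝ) :=
  {p | p.2 ∈ Set.uIcc (h v) (h w) ∧ p.1 = D.curve s(v, w) p.2}

/-- `p` is a crossing point of the two distinct edges `{v, w}` and `{v', w'}`:
it lies on both curves and is not the image of a shared endpoint. -/
def IsCrossing (D : ReebDrawing G h) (p : ℝ × ℝ) (v w v' w' : V) : Prop :=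
  G.Adj v w ∧ G.Adj v' w' ∧ s(v, w) ≠ s(v', w') ∧
    p ∈ D.edgeCurve v w ∧ p ∈ D.edgeCurve v' w' ∧
    ∀ u : V, (u = v ∨ u = w) → (u = v' ∨ u = w') → p ≠ D.pos u

/-- The set of crossings of a drawing: an unordered pair of (distinct) edges together
with a crossing point of these two edges. -/
def crossingSet (D : ReebDrawing G h) : Set (Sym2 (Sym2 V) × (ℝ × ℝ)) :=
  {q | ∃ v w v' w', q.1 = s(s(v, w), s(v', w')) ∧ D.IsCrossing q.2 v w v' w'}

/-- The number of crossings of a drawing, counted over all pairs of edges. -/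
noncomputable def numCrossings (D : ReebDrawing G h) : ℕ∞ := D.crossingSet.encard

/-- The crossings involving the fixed edge `e₀`: the other edge together with the
crossing point. -/
def edgeCrossings (D : ReebDrawing G h) (e₀ : Sym2 V) : Set (Sym2 V × (ℝ × ℝ)) :=
  {q | ∃ v w v' w', s(v, w) = e₀ ∧ q.1 = s(v', w') ∧ D.IsCrossing q.2 v w v' w'}

/-- The edge `{v, w}` is drawn as a straight line segment. -/
def Straight (D : ReebDrawing G h) (v w : V) : Prop :=
  ∀ y ∈ Set.uIcc (h v) (h w),
    D.curve s(v, w) y = D.x v + (y - h v) * (D.x w - D.x v) / (h w - h v)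

/-- The edge `{v, w}` is drawn as an `xy`-monotone curve: besides meeting every
horizontal line at most once (which holds by construction), it meets every vertical
line at most once. -/
def XYMonotone (D : ReebDrawing G h) (v w : V) : Prop :=
  Set.InjOn (D.curve s(v, w)) (Set.uIcc (h v) (h w))

/-- Edge `{v, w}` is (strictly) left of edge `{v', w'}`: at every height in the
interior of the common `y`-interval, the point of the first curve has strictly
smaller `x`-coordinate. -/
def LeftOf (D : ReebDrawing G h) (v w v' w' : V) : Prop :=
  ∀ y ∈ interior (Set.uIcc (h v) (h w) ∩ Set.uIcc (h v') (h w')),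
    D.curve s(v, w) y < D.curve s(v', w') y

end ReebDrawing

/-- The Reeb graph crossing number: the minimum number of crossings over all
drawings of `(G, h)`. -/
noncomputable def RGCN {V : Type*} (G : SimpleGraph V) (h : V → ℝ) : ℕ∞ :=
  ⨅ D : ReebDrawing G h, D.numCrossings

/-- The number of neighbours of `v` of strictly smaller height. -/
noncomputable def downDeg {V : Type*} (G : SimpleGraph V) (h : V → ℝ) (v : V) : ℕ :=
  {w | G.Adj v w ∧ h w < h v}.ncard

/-- The number of neighbours of `v` of strictly larger height. -/
noncomputable def upDeg {V : Type*} (G : SimpleGraph V) (h : V → ℝ) (v : V) : ℕ :=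
  {w | G.Adj v w ∧ h v < h w}.ncard

/-- A generic Reeb graph: all vertex heights are distinct, every vertex has degree
`1` or `3`, and every vertex has at most `2` lower and at most `2` higher neighbours. -/
def IsGenericReeb {V : Type*} (G : SimpleGraph V) (h : V → ℝ) : Prop :=
  Function.Injective h ∧
  (∀ v : V, (G.neighborSet v).ncard = 1 ∨ (G.neighborSet v).ncard = 3) ∧
  (∀ v : V, downDeg G h v ≤ 2 ∧ upDeg G h v ≤ 2)

/-- A subdivided Reeb graph: every edge joins vertices at consecutive levels (distinct
heights with no vertex height strictly in between), every vertex has degree at most `3`,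
with at most `2` lower and at most `2` higher neighbours. -/
def IsSubdividedReeb {V : Type*} (G : SimpleGraph V) (h : V → ℝ) : Prop :=
  (∀ v w : V, G.Adj v w → h v ≠ h w ∧
    ∀ u : V, h u ∉ Set.Ioo (min (h v) (h w)) (max (h v) (h w))) ∧
  (∀ v : V, (G.neighborSet v).ncard ≤ 3 ∧ downDeg G h v ≤ 2 ∧ upDeg G h v ≤ 2)

/-- `G` is the cycle graph on the enumeration `e` of its vertex set: adjacency holds
exactly between cyclically consecutive vertices. -/
def IsCycleEnum {V : Type*} {n : ℕ} (G : SimpleGraph V) (e : Fin n ≃ V) : Prop :=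
  ∀ i j : Fin n, G.Adj (e i) (e j) ↔ ((i.val + 1) % n = j.val ∨ (j.val + 1) % n = i.val)

/-- A caterpillar: a tree together with a central path (the spine) such that every
vertex is on the spine or adjacent to a spine vertex. -/
def IsCaterpillar {V : Type*} (G : SimpleGraph V) : Prop :=
  G.IsTree ∧ ∃ (n : ℕ) (s : Fin n → V),
    Function.Injective s ∧
    (∀ (i : ℕ) (hi : i + 1 < n), G.Adj (s ⟨i, Nat.lt_of_succ_lt hi⟩) (s ⟨i + 1, hi⟩)) ∧
    (∀ v : V, v ∈ Set.range s ∨ ∃ i : Fin n, G.Adj v (s i))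

/-!
Read both paths from the top, `g` backwards from `t₂`, so that each is a chain of `y`-monotone arcs
descending from height `t` to height `b`. If no arc of one chain met an arc of the other, the
parity of the number of pairs of arcs through height `y` with the arc of `r` on the left would be
locally constant on `(b, t)`: between vertex heights two arcs keep their order by the intermediate
value theorem, and at the height of a vertex the two arcs at that vertex enter or leave the count
together. But this parity is `1` just below `t` and `0` just above `b`.

For the drawing with one crossing, put `r i` at `x = i` and, going down `g`, its top vertex at
`x = p` and the others at `x = -1, -2, …`. Every edge is straight except the two top ones: fix a
level above all vertices but `t₁` and `t₂`; the top edge of `r` runs vertically from `t₁` down to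
that level, and the top edge of `g` stays at `x = -1` up to that level. These two edges cross
exactly once, and any two other edges are separated by a vertical line or meet only at a common
endpoint.
-/

open Filter Topology
open scoped Interval

def uIco (a b : ℝ) : Set ℝ := Ico (min a b) (max a b)

theorem uIco_subset_uIcc (a b : ℝ) : uIco a b ⊆ [[a, b]] :=
  Icc_min_max (a := a) (b := b) ▸ Ico_subset_Icc_self

theorem eventually_mem_uIoc_iff_of_le (u v y₀ : ℝ) :
    ∀ᶠ y in 𝓝[≤] y₀, (y ∈ Ι u v ↔ y₀ ∈ Ι u v) := by
  have below : ∀ w : ℝ, ∀ᶠ y in 𝓝[≤] y₀, w < y₀ → w < y := fun w => by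
    by_cases hw : w < y₀
    · filter_upwards [nhdsWithin_le_nhds (eventually_gt_nhds hw)] with y hy using fun _ => hy
    · exact .of_forall fun _ h => absurd h hw
  filter_upwards [below (min u v), below (max u v), self_mem_nhdsWithin] with y hmin hmax hy
  simp only [uIoc, mem_Ioc]
  exact ⟨fun ⟨h₁, h₂⟩ => ⟨h₁.trans_le hy, le_of_not_gt fun h => (hmax h).not_ge h₂⟩,
    fun ⟨h₁, h₂⟩ => ⟨hmin h₁, (mem_Iic.1 hy).trans h₂⟩⟩

theorem eventually_mem_uIoc_iff_of_gt (u v y₀ : ℝ) :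
    ∀ᶠ y in 𝓝[>] y₀, (y ∈ Ι u v ↔ y₀ ∈ uIco u v) := by
  have above : ∀ w : ℝ, ∀ᶠ y in 𝓝[>] y₀, y₀ < w → y < w := fun w => by
    by_cases hw : y₀ < w
    · filter_upwards [nhdsWithin_le_nhds (eventually_lt_nhds hw)] with y hy using fun _ => hy
    · exact .of_forall fun _ h => absurd h hw
  filter_upwards [above (min u v), above (max u v), self_mem_nhdsWithin] with y hmin hmax hy
  simp only [uIoc, uIco, mem_Ioc, mem_Ico]
  exact ⟨fun ⟨h₁, h₂⟩ => ⟨le_of_not_gt fun h => (hmin h).not_gt h₁, (mem_Ioi.1 hy).trans_le h₂⟩,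
    fun ⟨h₁, h₂⟩ => ⟨h₁.trans_lt hy, (hmax h₂).le⟩⟩

theorem lt_iff_lt_of_forall_ne {f g : ℝ → ℝ} {y z : ℝ} (hf : ContinuousOn f [[y, z]])
    (hg : ContinuousOn g [[y, z]]) (hne : ∀ w ∈ [[y, z]], f w ≠ g w) :
    f y < g y ↔ f z < g z := by
  have key : ∀ {y z}, ContinuousOn f [[y, z]] → ContinuousOn g [[y, z]] →
      (∀ w ∈ [[y, z]], f w ≠ g w) → f y < g y → f z < g z := fun hf hg hne hy =>
    lt_of_not_ge fun hz =>
      let ⟨w, hw, hfg⟩ := isPreconnected_uIcc.intermediate_value₂ left_mem_uIcc right_mem_uIcc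
        hf hg hy.le hz
      hne w hw hfg
  exact ⟨key hf hg hne, key (uIcc_comm y z ▸ hf) (uIcc_comm y z ▸ hg) (uIcc_comm y z ▸ hne)⟩

theorem IsPreconnected.apply_eq_of_eventually_eq {X Y : Type*} [TopologicalSpace X]
    [TopologicalSpace Y] [DiscreteTopology Y] {s : Set X} (hs : IsPreconnected s) {f : X → Y}
    (hf : ∀ x ∈ s, ∀ᶠ y in 𝓝 x, f y = f x) {x y : X} (hx : x ∈ s) (hy : y ∈ s) :
    f x = f y :=
  hs.constant (fun z hz => ContinuousAt.continuousWithinAt <| by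
    rw [ContinuousAt, nhds_discrete Y, tendsto_pure]; exact hf z hz) hx hy

open Classical in
noncomputable def oneIf (P : Prop) : ZMod 2 := if P then 1 else 0

theorem oneIf_mul_oneIf_mul_oneIf_congr {A A' B B' R R' : Prop} (hA : A ↔ A') (hB : B ↔ B')
    (hR : A' → B' → (R ↔ R')) :
    oneIf A * (oneIf B * oneIf R) = oneIf A' * (oneIf B' * oneIf R') := by
  by_cases h₁ : A'
  · by_cases h₂ : B'
    · simp only [hA, hB, hR h₁ h₂]
    · simp [oneIf, hB, h₂]
  · simp [oneIf, hA, h₁]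

theorem oneIf_uIco_eq {u v y₀ : ℝ} (huv : u ≠ v) :
    oneIf (y₀ ∈ uIco u v) = oneIf (y₀ ∈ Ι u v) + oneIf (u = y₀) + oneIf (v = y₀) := by
  wlog h : u < v generalizing u v
  · rw [uIco, min_comm, max_comm, uIoc_comm, add_right_comm]
    exact this huv.symm (huv.lt_or_gt.resolve_left h)
  simp only [uIoc, uIco, min_eq_left h.le, max_eq_right h.le, mem_Ico, mem_Ioc, oneIf]
  split_ifs <;> first | decide | grind

structure Descends (a : ℕ → ℝ) (n : ℕ) (t b : ℝ) : Prop where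
  start : a 0 = t
  finish : a n = b
  inner : ∀ k, 0 < k → k < n → a k ∈ Ioo b t

namespace Descends

variable {a : ℕ → ℝ} {n : ℕ} {t b : ℝ}

theorem n_pos (ha : Descends a n t b) (hbt : b < t) : 0 < n :=
  Nat.pos_of_ne_zero fun h => hbt.ne' (by rw [← ha.start, ← ha.finish, h])

theorem lt_top (ha : Descends a n t b) (hbt : b < t) {k : ℕ} (hk : 0 < k) (hkn : k ≤ n) :
    a k < t := by
  rcases hkn.lt_or_eq with hkn | rfl
  · exact (ha.inner k hk hkn).2
  · rwa [ha.finish]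

theorem bot_lt (ha : Descends a n t b) (hbt : b < t) {k : ℕ} (hk : k < n) : b < a k := by
  rcases Nat.eq_zero_or_pos k with rfl | hk₀
  · rwa [ha.start]
  · exact (ha.inner k hk₀ hk).1

theorem top_mem_uIoc_iff (ha : Descends a n t b) (hbt : b < t) {k : ℕ} (hk : k < n) :
    t ∈ Ι (a k) (a (k + 1)) ↔ k = 0 := by
  have h₁ := ha.lt_top hbt k.succ_pos hk
  rcases Nat.eq_zero_or_pos k with rfl | hk₀
  · simp [ha.start, h₁]
  · simp [mem_uIoc, hk₀.ne', (ha.lt_top hbt hk₀ hk.le).not_ge, h₁.not_ge]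

theorem bot_mem_uIco_iff (ha : Descends a n t b) (hbt : b < t) {k : ℕ} (hk : k < n) :
    b ∈ uIco (a k) (a (k + 1)) ↔ k = n - 1 := by
  have h₁ := ha.bot_lt hbt hk
  rcases (Nat.le_sub_one_of_lt hk).lt_or_eq with hk' | rfl
  · have h₂ := ha.bot_lt hbt (k := k + 1) (by omega)
    simp [uIco, h₁.not_ge, h₂.not_ge, hk'.ne]
  · rw [Nat.sub_add_cancel (ha.n_pos hbt), ha.finish]
    simp [uIco, h₁.le, h₁]

end Descends

/-- A chain of arcs in the plane: arc `k` is the graph `x = c k y` over the heights between `a k`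
and `a (k + 1)`, running from `(u k, a k)` to `(u (k + 1), a (k + 1))`. -/
structure ArcChain where
  n : ℕ
  a : ℕ → ℝ
  u : ℕ → ℝ
  c : ℕ → ℝ → ℝ
  continuous_c : ∀ k < n, Continuous (c k)
  c_start : ∀ k < n, c k (a k) = u k
  c_end : ∀ k < n, c k (a (k + 1)) = u (k + 1)
  a_ne : ∀ k < n, a k ≠ a (k + 1)

namespace ArcChain

variable (C D : ArcChain)

def arc (k : ℕ) : Set (ℝ × ℝ) := {p | p.2 ∈ [[C.a k, C.a (k + 1)]] ∧ p.1 = C.c k p.2}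

/-- The parity of the number of pairs of arcs, one of `C` and one of `D`, passing through height
`y` with the arc of `C` to the left. Arcs are counted over the half-open spans `Ι` of their
heights, which makes this parity continuous from below. -/
noncomputable def leftParity (y : ℝ) : ZMod 2 :=
  ∑ k ∈ Finset.range C.n, ∑ l ∈ Finset.range D.n,
    oneIf (y ∈ Ι (C.a k) (C.a (k + 1))) *
      (oneIf (y ∈ Ι (D.a l) (D.a (l + 1))) * oneIf (C.c k y < D.c l y))

theorem sum_oneIf_uIco_mul_eq {y₀ : ℝ} (h₀ : C.a 0 ≠ y₀) (hn : C.a C.n ≠ y₀) (F : ℝ → ZMod 2) :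
    ∑ k ∈ Finset.range C.n, oneIf (y₀ ∈ uIco (C.a k) (C.a (k + 1))) * F (C.c k y₀) =
      ∑ k ∈ Finset.range C.n, oneIf (y₀ ∈ Ι (C.a k) (C.a (k + 1))) * F (C.c k y₀) := by
  set E : ℕ → ZMod 2 := fun k => oneIf (C.a k = y₀) * F (C.u k)
  -- both arcs at a vertex `j` of height `y₀` contribute `E j` to the difference, so these cancel
  have hE : ∀ k < C.n, ∀ j ∈ ({k, k + 1} : Finset ℕ),
      oneIf (C.a j = y₀) * F (C.c k y₀) = E j := by
    intro k hk j hj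
    by_cases h : C.a j = y₀
    · show _ = oneIf (C.a j = y₀) * F (C.u j)
      rcases Finset.mem_insert.1 hj with rfl | hj
      · rw [← C.c_start j hk, h]
      · rw [Finset.mem_singleton.1 hj] at h ⊢
        rw [← C.c_end k hk, h]
    · simp [E, oneIf, h]
  have hk : ∀ k ∈ Finset.range C.n,
      oneIf (y₀ ∈ uIco (C.a k) (C.a (k + 1))) * F (C.c k y₀) =
        oneIf (y₀ ∈ Ι (C.a k) (C.a (k + 1))) * F (C.c k y₀) + (E (k + 1) - E k) := by
    intro k hk
    rw [Finset.mem_range] at hk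
    rw [oneIf_uIco_eq (C.a_ne k hk), add_mul, add_mul, hE k hk k (by simp),
      hE k hk (k + 1) (by simp), CharTwo.sub_eq_add, add_assoc, add_comm (E k)]
  rw [Finset.sum_congr rfl hk, Finset.sum_add_distrib, Finset.sum_range_sub]
  simp [E, oneIf, h₀, hn]

theorem sum_sum_oneIf_uIco_mul_eq {ι : Type*} (s : Finset ι) (G : ι → ℝ → ZMod 2) {y₀ : ℝ}
    (h₀ : C.a 0 ≠ y₀) (hn : C.a C.n ≠ y₀) :
    ∑ k ∈ Finset.range C.n, ∑ i ∈ s, oneIf (y₀ ∈ uIco (C.a k) (C.a (k + 1))) * G i (C.c k y₀) =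
      ∑ k ∈ Finset.range C.n, ∑ i ∈ s, oneIf (y₀ ∈ Ι (C.a k) (C.a (k + 1))) * G i (C.c k y₀) := by
  simp only [← Finset.mul_sum]
  exact C.sum_oneIf_uIco_mul_eq h₀ hn fun x => ∑ i ∈ s, G i x

theorem sum_sum_oneIf_uIco_eq_leftParity {y₀ : ℝ} (hC₀ : C.a 0 ≠ y₀) (hCn : C.a C.n ≠ y₀)
    (hD₀ : D.a 0 ≠ y₀) (hDn : D.a D.n ≠ y₀) :
    ∑ k ∈ Finset.range C.n, ∑ l ∈ Finset.range D.n,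
        oneIf (y₀ ∈ uIco (C.a k) (C.a (k + 1))) *
          (oneIf (y₀ ∈ uIco (D.a l) (D.a (l + 1))) * oneIf (C.c k y₀ < D.c l y₀)) =
      C.leftParity D y₀ := by
  rw [C.sum_sum_oneIf_uIco_mul_eq _ (fun l x => _ * oneIf (x < D.c l y₀)) hC₀ hCn,
    Finset.sum_comm]
  simp_rw [mul_left_comm (oneIf (y₀ ∈ Ι (C.a _) _))]
  rw [D.sum_sum_oneIf_uIco_mul_eq _ (fun k x => _ * oneIf (C.c k y₀ < x)) hD₀ hDn, leftParity,
    Finset.sum_comm]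
  simp_rw [mul_left_comm (oneIf (y₀ ∈ Ι (D.a _) _))]

theorem lt_iff_lt_of_arc_inter_eq_empty {k l : ℕ} (hk : k < C.n) (hl : l < D.n)
    (hkl : C.arc k ∩ D.arc l = ∅) {y z : ℝ}
    (hy : y ∈ [[C.a k, C.a (k + 1)]] ∩ [[D.a l, D.a (l + 1)]])
    (hz : z ∈ [[C.a k, C.a (k + 1)]] ∩ [[D.a l, D.a (l + 1)]]) :
    C.c k y < D.c l y ↔ C.c k z < D.c l z := by
  have hsub : [[y, z]] ⊆ [[C.a k, C.a (k + 1)]] ∩ [[D.a l, D.a (l + 1)]] :=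
    subset_inter (uIcc_subset_uIcc hy.1 hz.1) (uIcc_subset_uIcc hy.2 hz.2)
  refine lt_iff_lt_of_forall_ne (C.continuous_c k hk).continuousOn
    (D.continuous_c l hl).continuousOn fun w hw hcw => ?_
  exact eq_empty_iff_forall_notMem.1 hkl (C.c k w, w) ⟨⟨(hsub hw).1, rfl⟩, (hsub hw).2, hcw⟩

theorem eventually_leftParity_eq (hdisj : ∀ k < C.n, ∀ l < D.n, C.arc k ∩ D.arc l = ∅) {y₀ : ℝ}
    (hC₀ : C.a 0 ≠ y₀) (hCn : C.a C.n ≠ y₀) (hD₀ : D.a 0 ≠ y₀) (hDn : D.a D.n ≠ y₀) :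
    ∀ᶠ y in 𝓝 y₀, C.leftParity D y = C.leftParity D y₀ := by
  have hsign : ∀ k ∈ Finset.range C.n, ∀ l ∈ Finset.range D.n, ∀ {y z : ℝ},
      y ∈ [[C.a k, C.a (k + 1)]] → y ∈ [[D.a l, D.a (l + 1)]] → z ∈ [[C.a k, C.a (k + 1)]] →
      z ∈ [[D.a l, D.a (l + 1)]] → (C.c k y < D.c l y ↔ C.c k z < D.c l z) :=
    fun k hk l hl _ _ hy hy' hz hz' => C.lt_iff_lt_of_arc_inter_eq_empty D (Finset.mem_range.1 hk)
      (Finset.mem_range.1 hl) (hdisj k (Finset.mem_range.1 hk) l (Finset.mem_range.1 hl))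
      ⟨hy, hy'⟩ ⟨hz, hz'⟩
  rw [← nhdsLE_sup_nhdsGT, eventually_sup]
  constructor
  · filter_upwards [(eventually_all_finset (Finset.range C.n)).2 fun k _ =>
        eventually_mem_uIoc_iff_of_le (C.a k) (C.a (k + 1)) y₀,
      (eventually_all_finset (Finset.range D.n)).2 fun l _ =>
        eventually_mem_uIoc_iff_of_le (D.a l) (D.a (l + 1)) y₀] with y hC hD
    exact Finset.sum_congr rfl fun k hk => Finset.sum_congr rfl fun l hl =>
      oneIf_mul_oneIf_mul_oneIf_congr (hC k hk) (hD l hl) fun h₁ h₂ =>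
        hsign k hk l hl (uIoc_subset_uIcc ((hC k hk).2 h₁)) (uIoc_subset_uIcc ((hD l hl).2 h₂))
          (uIoc_subset_uIcc h₁) (uIoc_subset_uIcc h₂)
  · filter_upwards [(eventually_all_finset (Finset.range C.n)).2 fun k _ =>
        eventually_mem_uIoc_iff_of_gt (C.a k) (C.a (k + 1)) y₀,
      (eventually_all_finset (Finset.range D.n)).2 fun l _ =>
        eventually_mem_uIoc_iff_of_gt (D.a l) (D.a (l + 1)) y₀] with y hC hD
    rw [← C.sum_sum_oneIf_uIco_eq_leftParity D hC₀ hCn hD₀ hDn]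
    exact Finset.sum_congr rfl fun k hk => Finset.sum_congr rfl fun l hl =>
      oneIf_mul_oneIf_mul_oneIf_congr (hC k hk) (hD l hl) fun h₁ h₂ =>
        hsign k hk l hl (uIoc_subset_uIcc ((hC k hk).2 h₁)) (uIoc_subset_uIcc ((hD l hl).2 h₂))
          (uIco_subset_uIcc _ _ h₁) (uIco_subset_uIcc _ _ h₂)

theorem leftParity_eq_of_forall_mem_uIoc_iff {y : ℝ} {k₀ l₀ : ℕ} (hk₀ : k₀ < C.n)
    (hl₀ : l₀ < D.n) (hC : ∀ k < C.n, (y ∈ Ι (C.a k) (C.a (k + 1)) ↔ k = k₀))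
    (hD : ∀ l < D.n, (y ∈ Ι (D.a l) (D.a (l + 1)) ↔ l = l₀)) :
    C.leftParity D y = oneIf (C.c k₀ y < D.c l₀ y) := by
  rw [leftParity, Finset.sum_eq_single_of_mem k₀ (Finset.mem_range.2 hk₀),
    Finset.sum_eq_single_of_mem l₀ (Finset.mem_range.2 hl₀)]
  · simp [hC k₀ hk₀, hD l₀ hl₀, oneIf]
  · intro l hl hne
    simp [hD l (Finset.mem_range.1 hl), hne, oneIf]
  · intro k hk hne
    simp [hC k (Finset.mem_range.1 hk), hne, oneIf]

variable {C D} {t b : ℝ}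

theorem eventually_leftParity_eq_one (hC : Descends C.a C.n t b) (hD : Descends D.a D.n t b)
    (hbt : b < t) (htop : C.u 0 < D.u 0) : ∀ᶠ y in 𝓝[<] t, C.leftParity D y = 1 := by
  have spans : ∀ E : ArcChain, Descends E.a E.n t b →
      ∀ᶠ y in 𝓝[<] t, ∀ k < E.n, (y ∈ Ι (E.a k) (E.a (k + 1)) ↔ k = 0) := fun E hE => by
    filter_upwards [nhdsWithin_mono t Iio_subset_Iic_self <|
      (eventually_all_finset (Finset.range E.n)).2 fun k _ =>
        eventually_mem_uIoc_iff_of_le (E.a k) (E.a (k + 1)) t] with y hy k hk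
    rw [hy k (Finset.mem_range.2 hk), hE.top_mem_uIoc_iff hbt hk]
  have hC₀ := hC.n_pos hbt
  have hD₀ := hD.n_pos hbt
  have hlt : C.c 0 t < D.c 0 t := by
    rwa [← hC.start, C.c_start 0 hC₀, hC.start, ← hD.start, D.c_start 0 hD₀]
  filter_upwards [spans C hC, spans D hD, nhdsWithin_le_nhds <|
    (C.continuous_c 0 hC₀).continuousAt.eventually_lt (D.continuous_c 0 hD₀).continuousAt hlt]
    with y hCy hDy hy
  rw [C.leftParity_eq_of_forall_mem_uIoc_iff D hC₀ hD₀ hCy hDy]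
  simp [oneIf, hy]

theorem eventually_leftParity_eq_zero (hC : Descends C.a C.n t b) (hD : Descends D.a D.n t b)
    (hbt : b < t) (hbot : D.u D.n < C.u C.n) : ∀ᶠ y in 𝓝[>] b, C.leftParity D y = 0 := by
  have spans : ∀ E : ArcChain, Descends E.a E.n t b →
      ∀ᶠ y in 𝓝[>] b, ∀ k < E.n, (y ∈ Ι (E.a k) (E.a (k + 1)) ↔ k = E.n - 1) := fun E hE => by
    filter_upwards [(eventually_all_finset (Finset.range E.n)).2 fun k _ =>
        eventually_mem_uIoc_iff_of_gt (E.a k) (E.a (k + 1)) b] with y hy k hk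
    rw [hy k (Finset.mem_range.2 hk), hE.bot_mem_uIco_iff hbt hk]
  have hC₀ := hC.n_pos hbt
  have hD₀ := hD.n_pos hbt
  have hlt : D.c (D.n - 1) b < C.c (C.n - 1) b := by
    have hCe := C.c_end (C.n - 1) (by omega)
    have hDe := D.c_end (D.n - 1) (by omega)
    rw [Nat.sub_add_cancel hC₀, hC.finish] at hCe
    rw [Nat.sub_add_cancel hD₀, hD.finish] at hDe
    rwa [hCe, hDe]
  filter_upwards [spans C hC, spans D hD, nhdsWithin_le_nhds <|
    (D.continuous_c _ (by omega)).continuousAt.eventually_lt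
      (C.continuous_c _ (by omega)).continuousAt hlt] with y hCy hDy hy
  rw [C.leftParity_eq_of_forall_mem_uIoc_iff D (by omega) (by omega) hCy hDy]
  simp [oneIf, hy.not_gt]

theorem exists_arc_inter_nonempty (hC : Descends C.a C.n t b) (hD : Descends D.a D.n t b)
    (hbt : b < t) (htop : C.u 0 < D.u 0) (hbot : D.u D.n < C.u C.n) :
    ∃ k < C.n, ∃ l < D.n, (C.arc k ∩ D.arc l).Nonempty := by
  by_contra! hdisj
  have hconst : ∀ y ∈ Ioo b t, ∀ z ∈ Ioo b t, C.leftParity D y = C.leftParity D z :=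
    fun y hy z hz => isPreconnected_Ioo.apply_eq_of_eventually_eq (fun y₀ hy₀ =>
      C.eventually_leftParity_eq D hdisj (hC.start ▸ hy₀.2.ne') (hC.finish ▸ hy₀.1.ne)
        (hD.start ▸ hy₀.2.ne') (hD.finish ▸ hy₀.1.ne)) hy hz
  obtain ⟨y, hy₁, hy⟩ :=
    ((eventually_leftParity_eq_one hC hD hbt htop).and (Ioo_mem_nhdsLT hbt)).exists
  obtain ⟨z, hz₀, hz⟩ :=
    ((eventually_leftParity_eq_zero hC hD hbt hbot).and (Ioo_mem_nhdsGT hbt)).exists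
  exact absurd ((hy₁.symm.trans (hconst y hy z hz)).trans hz₀) (by decide)

end ArcChain

theorem eq_of_mem_uIcc_of_mem_uIcc {u : ℕ → ℝ} {n k k' : ℕ}
    (hu : StrictMonoOn u (Iic n) ∨ StrictAntiOn u (Iic n)) (hkk' : k < k') (hk' : k' < n)
    {x : ℝ} (hx : x ∈ [[u k, u (k + 1)]]) (hx' : x ∈ [[u k', u (k' + 1)]]) :
    k' = k + 1 ∧ x = u k' := by
  have hmem : ∀ {j}, j ≤ n → j ∈ Iic n := id
  have hle : k + 1 ≤ k' := hkk'
  rcases hu with hu | hu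
  · rw [uIcc_of_lt (hu (hmem (by omega)) (hmem (by omega)) k.lt_succ_self)] at hx
    rw [uIcc_of_lt (hu (hmem (by omega)) (hmem (by omega)) k'.lt_succ_self)] at hx'
    have h₁ : u (k + 1) ≤ u k' := hu.monotoneOn (hmem (by omega)) (hmem (by omega)) hle
    have h₂ : u k' = u (k + 1) := le_antisymm (hx'.1.trans hx.2) h₁
    exact ⟨hu.injOn (hmem (by omega)) (hmem (by omega)) h₂, le_antisymm (hx.2.trans h₁) hx'.1⟩
  · rw [uIcc_of_gt (hu (hmem (by omega)) (hmem (by omega)) k.lt_succ_self)] at hx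
    rw [uIcc_of_gt (hu (hmem (by omega)) (hmem (by omega)) k'.lt_succ_self)] at hx'
    have h₁ : u k' ≤ u (k + 1) := hu.antitoneOn (hmem (by omega)) (hmem (by omega)) hle
    have h₂ : u k' = u (k + 1) := le_antisymm h₁ (hx.1.trans hx'.2)
    exact ⟨hu.injOn (hmem (by omega)) (hmem (by omega)) h₂, le_antisymm hx'.2 (h₁.trans hx.1)⟩

namespace ArcChain

structure InStrips (C : ArcChain) : Prop where
  u_mono : StrictMonoOn C.u (Iic C.n) ∨ StrictAntiOn C.u (Iic C.n)
  c_mem_uIcc : ∀ k < C.n, ∀ y, C.c k y ∈ [[C.u k, C.u (k + 1)]]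
  eq_a_of_c_eq_u : ∀ k, 0 < k → k < C.n → ∀ y ∈ [[C.a k, C.a (k + 1)]], C.c k y = C.u k → y = C.a k

theorem InStrips.eq_of_mem_arc_of_mem_arc {C : ArcChain} (hC : C.InStrips) {k k' : ℕ}
    (hkk' : k < k') (hk' : k' < C.n) {p : ℝ × ℝ} (hp : p ∈ C.arc k) (hp' : p ∈ C.arc k') :
    k' = k + 1 ∧ p = (C.u k', C.a k') := by
  obtain ⟨rfl, hx⟩ := eq_of_mem_uIcc_of_mem_uIcc hC.u_mono hkk' hk'
    (hp.2 ▸ hC.c_mem_uIcc k (by omega) p.2) (hp'.2 ▸ hC.c_mem_uIcc k' hk' p.2)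
  exact ⟨rfl, Prod.ext hx (hC.eq_a_of_c_eq_u _ k.succ_pos hk' _ hp'.1 (hp'.2 ▸ hx))⟩

end ArcChain

namespace ReebDrawing

variable {V : Type*} {G : SimpleGraph V} {h : V → ℝ}

def pathChain (D : ReebDrawing G h) (w : ℕ → V) (n : ℕ) (hw : ∀ k < n, G.Adj (w k) (w (k + 1)))
    (hh : ∀ v v', G.Adj v v' → h v ≠ h v') : ArcChain where
  n := n
  a k := h (w k)
  u k := D.x (w k)
  c k := D.curve s(w k, w (k + 1))
  continuous_c k hk := D.curve_cont _ (hw k hk)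
  c_start k hk := D.curve_end _ _ (hw k hk)
  c_end k hk := by rw [Sym2.eq_swap]; exact D.curve_end _ _ (hw k hk).symm
  a_ne k hk := hh _ _ (hw k hk)

theorem edgeCurve_congr (D : ReebDrawing G h) {v w v' w' : V} (he : s(v, w) = s(v', w')) :
    D.edgeCurve v w = D.edgeCurve v' w' := by
  rcases Sym2.eq_iff.1 he with ⟨rfl, rfl⟩ | ⟨rfl, rfl⟩
  · rfl
  · rw [edgeCurve, edgeCurve, Sym2.eq_swap, uIcc_comm]

theorem numCrossings_eq_one (D : ReebDrawing G h) {v w v' w' : V} {p : ℝ × ℝ}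
    (hp : D.IsCrossing p v w v' w')
    (huniq : ∀ v₁ w₁ v₁' w₁' p₁, D.IsCrossing p₁ v₁ w₁ v₁' w₁' →
      s(s(v₁, w₁), s(v₁', w₁')) = s(s(v, w), s(v', w')) ∧ p₁ = p) :
    D.numCrossings = 1 := by
  refine encard_eq_one.2 ⟨(s(s(v, w), s(v', w')), p), Set.ext fun ⟨e, p₁⟩ => ⟨?_, ?_⟩⟩
  · rintro ⟨v₁, w₁, v₁', w₁', rfl, hp₁⟩
    obtain ⟨he, rfl⟩ := huniq v₁ w₁ v₁' w₁' p₁ hp₁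
    rw [he]; rfl
  · rintro ⟨⟩
    exact ⟨v, w, v', w', rfl, hp⟩

theorem not_isCrossing_of_inStrips (D : ReebDrawing G h) {w : ℕ → V} {C : ArcChain}
    (hC : C.InStrips) (hpos : ∀ k ≤ C.n, (C.u k, C.a k) = D.pos (w k))
    (harc : ∀ k < C.n, D.edgeCurve (w k) (w (k + 1)) = C.arc k) {k k' : ℕ} (hk : k < C.n)
    (hk' : k' < C.n) {p : ℝ × ℝ} {v₁ w₁ v₂ w₂ : V}
    (he₁ : s(w k, w (k + 1)) = s(v₁, w₁)) (he₂ : s(w k', w (k' + 1)) = s(v₂, w₂)) :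
    ¬ D.IsCrossing p v₁ w₁ v₂ w₂ := by
  rintro ⟨-, -, hne, hp₁, hp₂, hend⟩
  rw [← D.edgeCurve_congr he₁, harc k hk] at hp₁
  rw [← D.edgeCurve_congr he₂, harc k' hk'] at hp₂
  rcases lt_trichotomy k k' with hlt | rfl | hlt
  · obtain ⟨rfl, rfl⟩ := hC.eq_of_mem_arc_of_mem_arc hlt hk' hp₁ hp₂
    exact hend _ (Sym2.mem_iff.1 (he₁ ▸ Sym2.mem_mk_right _ _))
      (Sym2.mem_iff.1 (he₂ ▸ Sym2.mem_mk_left _ _)) (hpos _ hk'.le)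
  · exact hne (he₁.symm.trans he₂)
  · obtain ⟨rfl, rfl⟩ := hC.eq_of_mem_arc_of_mem_arc hlt hk hp₂ hp₁
    exact hend _ (Sym2.mem_iff.1 (he₁ ▸ Sym2.mem_mk_left _ _))
      (Sym2.mem_iff.1 (he₂ ▸ Sym2.mem_mk_right _ _)) (hpos _ hk.le)

end ReebDrawing

noncomputable def ramp (y₁ y₂ x₁ x₂ y : ℝ) : ℝ :=
  x₁ + (x₂ - x₁) * max 0 (min 1 ((y - y₁) / (y₂ - y₁)))

section Ramp

variable {y₁ y₂ x₁ x₂ y : ℝ}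

theorem continuous_ramp (y₁ y₂ x₁ x₂ : ℝ) : Continuous (ramp y₁ y₂ x₁ x₂) := by
  unfold ramp
  fun_prop

theorem ramp_mem_uIcc : ramp y₁ y₂ x₁ x₂ y ∈ [[x₁, x₂]] := by
  have h₀ : 0 ≤ max 0 (min 1 ((y - y₁) / (y₂ - y₁))) := le_max_left _ _
  have h₁ : max 0 (min 1 ((y - y₁) / (y₂ - y₁))) ≤ 1 := max_le zero_le_one (min_le_left _ _)
  rw [ramp, mem_uIcc]
  rcases le_total x₁ x₂ with h | h
  · exact .inl ⟨by nlinarith, by nlinarith⟩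
  · exact .inr ⟨by nlinarith, by nlinarith⟩

theorem ramp_eq_left (hy : (y - y₁) / (y₂ - y₁) ≤ 0) : ramp y₁ y₂ x₁ x₂ y = x₁ := by
  simp [ramp, max_eq_left (min_le_of_right_le hy)]

theorem ramp_right (h : y₁ ≠ y₂) : ramp y₁ y₂ x₁ x₂ y₂ = x₂ := by
  simp [ramp, div_self (sub_ne_zero.2 h.symm)]

theorem div_sub_mem_Icc_of_mem_uIcc (hy : y ∈ [[y₁, y₂]]) : (y - y₁) / (y₂ - y₁) ∈ Icc 0 1 := by
  rcases (mem_uIcc.1 hy) with ⟨h₁, h₂⟩ | ⟨h₁, h₂⟩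
  · rcases h₁.eq_or_lt with rfl | h₁
    · simp
    · exact ⟨div_nonneg (by linarith) (by linarith), div_le_one_of_le₀ (by linarith) (by linarith)⟩
  · rcases h₂.eq_or_lt with rfl | h₂
    · simp
    · exact ⟨div_nonneg_of_nonpos (by linarith) (by linarith),
        (div_le_one_of_neg (by linarith)).2 (by linarith)⟩

theorem eq_of_ramp_eq_left (hx : x₁ ≠ x₂) (hy : y ∈ [[y₁, y₂]]) (h : ramp y₁ y₂ x₁ x₂ y = x₁) :
    y = y₁ := by
  obtain ⟨h₀, h₁⟩ := div_sub_mem_Icc_of_mem_uIcc hy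
  rw [ramp, min_eq_right h₁, max_eq_right h₀, add_eq_left, mul_eq_zero, sub_eq_zero,
    div_eq_zero_iff, sub_eq_zero, sub_eq_zero] at h
  rcases h with h | h | h
  · exact absurd h.symm hx
  · exact h
  · rw [h, uIcc_self] at hy
    exact hy

theorem ramp_eq_iff {x : ℝ} (hy : y₁ ≠ y₂) (hx₁ : x₁ < x) (hx₂ : x < x₂) :
    ramp y₁ y₂ x₁ x₂ y = x ↔ y = y₁ + (x - x₁) / (x₂ - x₁) * (y₂ - y₁) := by
  have hd : x₂ - x₁ ≠ 0 := by linarith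
  have hs₀ : 0 < (x - x₁) / (x₂ - x₁) := div_pos (by linarith) (by linarith)
  have hs₁ : (x - x₁) / (x₂ - x₁) < 1 := (div_lt_one (by linarith)).2 (by linarith)
  have hclamp : ∀ θ s : ℝ, 0 < s → s < 1 → (max 0 (min 1 θ) = s ↔ θ = s) := by
    intro θ s h₀ h₁
    constructor
    · intro h
      rcases le_total θ 0 with hθ | hθ
      · rw [max_eq_left (min_le_of_right_le hθ)] at h; linarith
      rcases le_total 1 θ with hθ' | hθ'
      · rw [min_eq_left hθ', max_eq_right zero_le_one] at h; linarith
      · rwa [min_eq_right hθ', max_eq_right hθ] at h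
    · rintro rfl
      rw [min_eq_right h₁.le, max_eq_right h₀.le]
  rw [ramp, ← eq_sub_iff_add_eq', mul_comm, ← eq_div_iff hd, hclamp _ _ hs₀ hs₁,
    div_eq_iff (sub_ne_zero.2 hy.symm)]
  constructor <;> intro h <;> linarith

end Ramp

structure TwoDescendingPaths {V : Type*} (G : SimpleGraph V) (h : V → ℝ) (t b : ℝ) (P Q : ℕ → V)
    (n m : ℕ) : Prop where
  bot_lt_top : b < t
  adj_iff : ∀ v w, G.Adj v w ↔
    (∃ k < n, s(P k, P (k + 1)) = s(v, w)) ∨ ∃ k < m, s(Q k, Q (k + 1)) = s(v, w)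
  height_ne : ∀ v w, G.Adj v w → h v ≠ h w
  descends_P : Descends (fun k => h (P k)) n t b
  descends_Q : Descends (fun k => h (Q k)) m t b
  injOn_P : InjOn P (Iic n)
  injOn_Q : InjOn Q (Iic m)
  P_ne_Q : ∀ i j, P i ≠ Q j
  cover : ∀ v, (∃ k ≤ n, P k = v) ∨ ∃ k ≤ m, Q k = v

theorem eq_of_sym2_eq_of_injOn {V : Type*} {w : ℕ → V} {n i j : ℕ} (hw : InjOn w (Iic n))
    (hi : i < n) (hj : j < n) (he : s(w i, w (i + 1)) = s(w j, w (j + 1))) : i = j := by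
  rcases Sym2.eq_iff.1 he with ⟨h₁, -⟩ | ⟨h₁, h₂⟩
  · exact hw (mem_Iic.2 hi.le) (mem_Iic.2 hj.le) h₁
  · have := hw (mem_Iic.2 hi.le) (mem_Iic.2 hj) h₁
    have := hw (mem_Iic.2 hi) (mem_Iic.2 hj.le) h₂
    omega

namespace TwoDescendingPaths

variable {V : Type*} {G : SimpleGraph V} {h : V → ℝ} {t b : ℝ} {P Q : ℕ → V} {n m : ℕ}

theorem adj_P (hG : TwoDescendingPaths G h t b P Q n m) {k : ℕ} (hk : k < n) :
    G.Adj (P k) (P (k + 1)) :=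
  (hG.adj_iff _ _).2 (.inl ⟨k, hk, rfl⟩)

theorem adj_Q (hG : TwoDescendingPaths G h t b P Q n m) {k : ℕ} (hk : k < m) :
    G.Adj (Q k) (Q (k + 1)) :=
  (hG.adj_iff _ _).2 (.inr ⟨k, hk, rfl⟩)

theorem adj_induction (hG : TwoDescendingPaths G h t b P Q n m) {p : V → V → Prop}
    (hP : ∀ k < n, p (P k) (P (k + 1)) ∧ p (P (k + 1)) (P k))
    (hQ : ∀ k < m, p (Q k) (Q (k + 1)) ∧ p (Q (k + 1)) (Q k)) {v w : V} (hvw : G.Adj v w) :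
    p v w := by
  rcases (hG.adj_iff v w).1 hvw with ⟨k, hk, he⟩ | ⟨k, hk, he⟩ <;>
    rcases Sym2.eq_iff.1 he with ⟨rfl, rfl⟩ | ⟨rfl, rfl⟩
  exacts [(hP k hk).1, (hP k hk).2, (hQ k hk).1, (hQ k hk).2]

theorem isCrossing_of_mem (hG : TwoDescendingPaths G h t b P Q n m) (D : ReebDrawing G h)
    {k l : ℕ} (hk : k < n) (hl : l < m) {p : ℝ × ℝ} (hpP : p ∈ D.edgeCurve (P k) (P (k + 1)))
    (hpQ : p ∈ D.edgeCurve (Q l) (Q (l + 1))) :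
    D.IsCrossing p (P k) (P (k + 1)) (Q l) (Q (l + 1)) :=
  ⟨hG.adj_P hk, hG.adj_Q hl,
    fun he => (Sym2.mem_iff.1 (he ▸ Sym2.mem_mk_left _ _)).elim (hG.P_ne_Q _ _) (hG.P_ne_Q _ _),
    hpP, hpQ, fun _ hu hu' => by
      rcases hu with rfl | rfl <;> rcases hu' with h' | h' <;> exact absurd h' (hG.P_ne_Q _ _)⟩

theorem one_le_numCrossings (hG : TwoDescendingPaths G h t b P Q n m) (D : ReebDrawing G h)
    (htop : D.x (P 0) < D.x (Q 0)) (hbot : D.x (Q m) < D.x (P n)) : 1 ≤ D.numCrossings := by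
  obtain ⟨k, hk, l, hl, p, hpP, hpQ⟩ := ArcChain.exists_arc_inter_nonempty
    (C := D.pathChain P n (fun _ => hG.adj_P) hG.height_ne)
    (D := D.pathChain Q m (fun _ => hG.adj_Q) hG.height_ne)
    hG.descends_P hG.descends_Q hG.bot_lt_top htop hbot
  exact one_le_encard_iff_nonempty.2 ⟨(_, p), _, _, _, _, rfl, hG.isCrossing_of_mem D hk hl hpP hpQ⟩

theorem exists_extend_vertex (hG : TwoDescendingPaths G h t b P Q n m) (f g : ℕ → ℝ) :
    ∃ X : V → ℝ, (∀ k ≤ n, X (P k) = f k) ∧ ∀ k ≤ m, X (Q k) = g k := by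
  have hφ : Function.Injective (Sum.elim (fun k : Iic n => P k) fun k : Iic m => Q k) := by
    rintro (⟨i, hi⟩ | ⟨i, hi⟩) (⟨j, hj⟩ | ⟨j, hj⟩) he <;>
      simp only [Sum.elim_inl, Sum.elim_inr] at he
    · obtain rfl := hG.injOn_P hi hj he; rfl
    · exact absurd he (hG.P_ne_Q i j)
    · exact absurd he.symm (hG.P_ne_Q j i)
    · obtain rfl := hG.injOn_Q hi hj he; rfl
  exact ⟨Function.extend _ (Sum.elim (fun k : Iic n => f k) fun k : Iic m => g k) 0,
    fun k hk => hφ.extend_apply _ _ (.inl ⟨k, hk⟩), fun k hk => hφ.extend_apply _ _ (.inr ⟨k, hk⟩)⟩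

theorem exists_extend_edge (hG : TwoDescendingPaths G h t b P Q n m) (f g : ℕ → ℝ → ℝ) :
    ∃ c : Sym2 V → ℝ → ℝ,
      (∀ k < n, c s(P k, P (k + 1)) = f k) ∧ ∀ k < m, c s(Q k, Q (k + 1)) = g k := by
  have hφ : Function.Injective
      (Sum.elim (fun k : Iio n => s(P k, P (k + 1))) fun k : Iio m => s(Q k, Q (k + 1))) := by
    rintro (⟨i, hi⟩ | ⟨i, hi⟩) (⟨j, hj⟩ | ⟨j, hj⟩) he <;>
      simp only [Sum.elim_inl, Sum.elim_inr] at he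
    · obtain rfl := eq_of_sym2_eq_of_injOn hG.injOn_P hi hj he; rfl
    · exact absurd (he ▸ Sym2.mem_mk_left _ _ : P i ∈ s(Q j, Q (j + 1)))
        fun hm => (Sym2.mem_iff.1 hm).elim (hG.P_ne_Q _ _) (hG.P_ne_Q _ _)
    · exact absurd (he ▸ Sym2.mem_mk_left _ _ : P j ∈ s(Q i, Q (i + 1)))
        fun hm => (Sym2.mem_iff.1 hm).elim (hG.P_ne_Q _ _) (hG.P_ne_Q _ _)
    · obtain rfl := eq_of_sym2_eq_of_injOn hG.injOn_Q hi hj he; rfl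
  exact ⟨Function.extend _ (Sum.elim (fun k : Iio n => f k) fun k : Iio m => g k) 0,
    fun k hk => hφ.extend_apply _ _ (.inl ⟨k, hk⟩), fun k hk => hφ.extend_apply _ _ (.inr ⟨k, hk⟩)⟩

theorem injective_of_eq_on_paths (hG : TwoDescendingPaths G h t b P Q n m) {X : V → ℝ}
    {f g : ℕ → ℝ} (hXP : ∀ k ≤ n, X (P k) = f k) (hXQ : ∀ k ≤ m, X (Q k) = g k)
    (hf : InjOn f (Iic n)) (hg : InjOn g (Iic m)) (hfg : ∀ i ≤ n, ∀ j ≤ m, f i ≠ g j) :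
    Function.Injective X := by
  intro v v' he
  rcases hG.cover v with ⟨i, hi, rfl⟩ | ⟨i, hi, rfl⟩ <;>
    rcases hG.cover v' with ⟨j, hj, rfl⟩ | ⟨j, hj, rfl⟩
  · rw [hXP i hi, hXP j hj] at he
    rw [hf hi hj he]
  · exact absurd (by rwa [hXP i hi, hXQ j hj] at he) (hfg i hi j hj)
  · exact absurd (by rwa [hXQ i hi, hXP j hj, eq_comm] at he) (hfg j hj i hi)
  · rw [hXQ i hi, hXQ j hj] at he
    rw [hg hi hj he]

theorem exists_drawing_of_chains (hG : TwoDescendingPaths G h t b P Q n m) (CP CQ : ArcChain)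
    (hnP : CP.n = n) (hnQ : CQ.n = m) (haP : ∀ k, CP.a k = h (P k)) (haQ : ∀ k, CQ.a k = h (Q k))
    (huP : InjOn CP.u (Iic n)) (huQ : InjOn CQ.u (Iic m))
    (huPQ : ∀ i ≤ n, ∀ j ≤ m, CP.u i ≠ CQ.u j) :
    ∃ D : ReebDrawing G h, (∀ k ≤ n, D.x (P k) = CP.u k) ∧ (∀ k ≤ m, D.x (Q k) = CQ.u k) ∧
      (∀ k < n, D.edgeCurve (P k) (P (k + 1)) = CP.arc k) ∧
      ∀ k < m, D.edgeCurve (Q k) (Q (k + 1)) = CQ.arc k := by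
  subst hnP hnQ
  obtain ⟨X, hXP, hXQ⟩ := hG.exists_extend_vertex CP.u CQ.u
  obtain ⟨c, hcP, hcQ⟩ := hG.exists_extend_edge CP.c CQ.c
  have hX := hG.injective_of_eq_on_paths hXP hXQ huP huQ huPQ
  have hcont : ∀ {v w}, G.Adj v w → Continuous (c s(v, w)) :=
    hG.adj_induction (p := fun v w => Continuous (c s(v, w)))
    (fun k hk => ⟨hcP k hk ▸ CP.continuous_c k hk, Sym2.eq_swap ▸ hcP k hk ▸ CP.continuous_c k hk⟩)
    (fun k hk => ⟨hcQ k hk ▸ CQ.continuous_c k hk, Sym2.eq_swap ▸ hcQ k hk ▸ CQ.continuous_c k hk⟩)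
  have hend : ∀ {v w}, G.Adj v w → c s(v, w) (h v) = X v :=
    hG.adj_induction (p := fun v w => c s(v, w) (h v) = X v)
    (fun k hk => ⟨by rw [hcP k hk, hXP k hk.le, ← haP, CP.c_start k hk],
      by rw [Sym2.eq_swap, hcP k hk, hXP (k + 1) hk, ← haP, CP.c_end k hk]⟩)
    (fun k hk => ⟨by rw [hcQ k hk, hXQ k hk.le, ← haQ, CQ.c_start k hk],
      by rw [Sym2.eq_swap, hcQ k hk, hXQ (k + 1) hk, ← haQ, CQ.c_end k hk]⟩)
  refine ⟨⟨X, fun v w he => hX (congrArg Prod.fst he), c, fun e he => ?_, fun v w => hend⟩,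
    hXP, hXQ, fun k hk => ?_, fun k hk => ?_⟩
  · induction e using Sym2.ind with
    | _ v w => exact hcont he
  · ext p
    simp only [ReebDrawing.edgeCurve, ArcChain.arc, hcP k hk, haP]
  · ext p
    simp only [ReebDrawing.edgeCurve, ArcChain.arc, hcQ k hk, haQ]

theorem exists_level (hG : TwoDescendingPaths G h t b P Q n m) :
    ∃ y₀ < t, (∀ k, 0 < k → k ≤ n → h (P k) < y₀) ∧ ∀ k, 0 < k → k ≤ m → h (Q k) < y₀ := by
  have below : ∀ {a : ℕ → ℝ} {N : ℕ}, Descends a N t b →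
      ∀ᶠ y in 𝓝 t, ∀ k ∈ Finset.Ioc 0 N, a k < y := fun ha =>
    (eventually_all_finset _).2 fun k hk => eventually_gt_nhds
      (ha.lt_top hG.bot_lt_top (Finset.mem_Ioc.1 hk).1 (Finset.mem_Ioc.1 hk).2)
  obtain ⟨y₀, ⟨hP, hQ⟩, hy₀⟩ := (((below hG.descends_P).and (below hG.descends_Q)).filter_mono
    nhdsWithin_le_nhds |>.and (self_mem_nhdsWithin (s := Iio t))).exists
  exact ⟨y₀, hy₀, fun k h₁ h₂ => hP k (Finset.mem_Ioc.2 ⟨h₁, h₂⟩),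
    fun k h₁ h₂ => hQ k (Finset.mem_Ioc.2 ⟨h₁, h₂⟩)⟩

noncomputable def level (hG : TwoDescendingPaths G h t b P Q n m) : ℝ := hG.exists_level.choose

theorem level_lt (hG : TwoDescendingPaths G h t b P Q n m) : hG.level < t :=
  hG.exists_level.choose_spec.1

theorem lt_level_P (hG : TwoDescendingPaths G h t b P Q n m) {k : ℕ} (hk : 0 < k) (hkn : k ≤ n) :
    h (P k) < hG.level :=
  hG.exists_level.choose_spec.2.1 k hk hkn

theorem lt_level_Q (hG : TwoDescendingPaths G h t b P Q n m) {k : ℕ} (hk : 0 < k) (hkn : k ≤ m) :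
    h (Q k) < hG.level :=
  hG.exists_level.choose_spec.2.2 k hk hkn

def qPos (n k : ℕ) : ℝ := if k = 0 then n + 1 else -k

noncomputable def pChain (hG : TwoDescendingPaths G h t b P Q n m) : ArcChain where
  n := n
  a k := h (P k)
  u k := k
  c k := if k = 0 then ramp hG.level (h (P 1)) 0 1 else ramp (h (P k)) (h (P (k + 1))) k ↑(k + 1)
  continuous_c k _ := by split_ifs <;> apply continuous_ramp
  c_start k hk := by
    split_ifs with hk₀
    · subst hk₀
      rw [ramp_eq_left, Nat.cast_zero]
      exact div_nonpos_of_nonneg_of_nonpos (by linarith [hG.descends_P.start, hG.level_lt])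
        (by linarith [hG.lt_level_P one_pos hk])
    · exact ramp_eq_left (by simp)
  c_end k hk := by
    split_ifs with hk₀
    · subst hk₀
      simpa using ramp_right (x₁ := 0) (x₂ := 1) (hG.lt_level_P one_pos hk).ne'
    · exact ramp_right (hG.height_ne _ _ (hG.adj_P hk))
  a_ne k hk := hG.height_ne _ _ (hG.adj_P hk)

noncomputable def qChain (hG : TwoDescendingPaths G h t b P Q n m) : ArcChain where
  n := m
  a k := h (Q k)
  u k := qPos n k
  c k := if k = 0 then ramp hG.level t (-1) (n + 1)
    else ramp (h (Q k)) (h (Q (k + 1))) (qPos n k) (qPos n (k + 1))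
  continuous_c k _ := by split_ifs <;> apply continuous_ramp
  c_start k hk := by
    split_ifs with hk₀
    · subst hk₀
      rw [show h (Q 0) = t from hG.descends_Q.start, ramp_right hG.level_lt.ne]
      simp [qPos]
    · exact ramp_eq_left (by simp)
  c_end k hk := by
    split_ifs with hk₀
    · subst hk₀
      rw [ramp_eq_left]
      · simp [qPos]
      · exact div_nonpos_of_nonpos_of_nonneg (by simpa using (hG.lt_level_Q one_pos hk).le)
          (by linarith [hG.level_lt])
    · exact ramp_right (hG.height_ne _ _ (hG.adj_Q hk))
  a_ne k hk := hG.height_ne _ _ (hG.adj_Q hk)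

theorem pChain_strictMonoOn (hG : TwoDescendingPaths G h t b P Q n m) :
    StrictMonoOn hG.pChain.u (Iic n) :=
  fun _ _ _ _ hij => Nat.cast_lt.2 hij

theorem qChain_strictAntiOn (hG : TwoDescendingPaths G h t b P Q n m) :
    StrictAntiOn hG.qChain.u (Iic m) := by
  intro i _ j _ hij
  simp only [qChain, qPos, if_neg (by omega : j ≠ 0)]
  split_ifs
  · linarith [(Nat.cast_nonneg j : (0 : ℝ) ≤ j), (Nat.cast_nonneg n : (0 : ℝ) ≤ n)]
  · exact neg_lt_neg (Nat.cast_lt.2 hij)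

theorem pChain_u_ne_qChain_u (hG : TwoDescendingPaths G h t b P Q n m) {i j : ℕ} (hi : i ≤ n) :
    hG.pChain.u i ≠ hG.qChain.u j := by
  simp only [pChain, qChain, qPos]
  split_ifs with hj
  · exact ne_of_lt (by exact_mod_cast Nat.lt_succ_of_le hi)
  · exact ne_of_gt (neg_neg_of_pos (by exact_mod_cast Nat.pos_of_ne_zero hj) |>.trans_le
      (Nat.cast_nonneg i))

theorem pChain_c_mem_uIcc (hG : TwoDescendingPaths G h t b P Q n m) (k : ℕ) (y : ℝ) :
    hG.pChain.c k y ∈ [[hG.pChain.u k, hG.pChain.u (k + 1)]] := by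
  simp only [pChain]
  split_ifs with hk₀
  · subst hk₀
    simpa using (ramp_mem_uIcc : ramp hG.level (h (P 1)) 0 1 y ∈ [[0, 1]])
  · exact ramp_mem_uIcc

theorem qChain_c_mem_uIcc (hG : TwoDescendingPaths G h t b P Q n m) (k : ℕ) (y : ℝ) :
    hG.qChain.c k y ∈ [[hG.qChain.u k, hG.qChain.u (k + 1)]] := by
  simp only [qChain]
  split_ifs with hk₀
  · subst hk₀
    rw [uIcc_comm]
    simpa [qPos] using ramp_mem_uIcc
  · exact ramp_mem_uIcc

theorem pChain_inStrips (hG : TwoDescendingPaths G h t b P Q n m) : hG.pChain.InStrips where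
  u_mono := .inl hG.pChain_strictMonoOn
  c_mem_uIcc k _ := hG.pChain_c_mem_uIcc k
  eq_a_of_c_eq_u k hk _ y hy hc := by
    simp only [pChain, if_neg hk.ne'] at hy hc ⊢
    exact eq_of_ramp_eq_left (by simp) hy hc

theorem qChain_inStrips (hG : TwoDescendingPaths G h t b P Q n m) : hG.qChain.InStrips where
  u_mono := .inr hG.qChain_strictAntiOn
  c_mem_uIcc k _ := hG.qChain_c_mem_uIcc k
  eq_a_of_c_eq_u k hk _ y hy hc := by
    simp only [qChain, if_neg hk.ne'] at hy hc ⊢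
    exact eq_of_ramp_eq_left (by simp [qPos, hk.ne']) hy hc

noncomputable def crossHeight (hG : TwoDescendingPaths G h t b P Q n m) : ℝ :=
  hG.level + (t - hG.level) / (n + 2)

theorem crossHeight_mem_Ioo (hG : TwoDescendingPaths G h t b P Q n m) :
    hG.crossHeight ∈ Ioo hG.level t := by
  have hd : 0 < t - hG.level := sub_pos.2 hG.level_lt
  have hn : (1 : ℝ) < n + 2 := by linarith [(Nat.cast_nonneg n : (0 : ℝ) ≤ n)]
  rw [crossHeight]
  exact ⟨lt_add_of_pos_right _ (div_pos hd (by linarith)), by linarith [div_lt_self hd hn]⟩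

theorem qChain_c_zero_eq_zero_iff (hG : TwoDescendingPaths G h t b P Q n m) {y : ℝ} :
    hG.qChain.c 0 y = 0 ↔ y = hG.crossHeight := by
  simp only [qChain, if_pos]
  rw [ramp_eq_iff hG.level_lt.ne (by norm_num) (by positivity), crossHeight]
  constructor <;> rintro rfl <;> ring

theorem pChain_c_zero_eq_zero (hG : TwoDescendingPaths G h t b P Q n m) (hn : 0 < n) {y : ℝ}
    (hy : hG.level ≤ y) : hG.pChain.c 0 y = 0 := by
  simp only [pChain, if_pos]
  exact ramp_eq_left (div_nonpos_of_nonneg_of_nonpos (by linarith)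
    (by linarith [hG.lt_level_P one_pos hn]))

theorem qChain_c_zero_eq_neg_one (hG : TwoDescendingPaths G h t b P Q n m) {y : ℝ}
    (hy : y ≤ hG.level) : hG.qChain.c 0 y = -1 :=
  ramp_eq_left (div_nonpos_of_nonpos_of_nonneg (by linarith) (by linarith [hG.level_lt]))

theorem eq_of_mem_pChain_arc_of_mem_qChain_arc (hG : TwoDescendingPaths G h t b P Q n m)
    {k l : ℕ} (hk : k < n) (hl : l < m) {p : ℝ × ℝ} (hpP : p ∈ hG.pChain.arc k)
    (hpQ : p ∈ hG.qChain.arc l) :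
    k = 0 ∧ l = 0 ∧ p = (0, hG.crossHeight) := by
  obtain ⟨hyP, hxP⟩ := hpP
  obtain ⟨hyQ, hxQ⟩ := hpQ
  have hx₀ : 0 ≤ p.1 := by
    have := hxP ▸ hG.pChain_c_mem_uIcc k p.2
    exact (le_inf (Nat.cast_nonneg k) (Nat.cast_nonneg (k + 1))).trans this.1
  obtain rfl : l = 0 := by
    by_contra hl₀
    have := hxQ ▸ hG.qChain_c_mem_uIcc l p.2
    have : p.1 ≤ -1 := this.2.trans <| sup_le (by simp [qChain, qPos, hl₀]; omega)
      (by simp [qChain, qPos])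
    linarith
  have hlevel : hG.level < p.2 := by
    by_contra! hle
    linarith [hxQ.trans (hG.qChain_c_zero_eq_neg_one hle)]
  obtain rfl : k = 0 := by
    by_contra hk₀
    have : max (h (P k)) (h (P (k + 1))) < hG.level :=
      max_lt (hG.lt_level_P (Nat.pos_of_ne_zero hk₀) hk.le) (hG.lt_level_P k.succ_pos hk)
    exact absurd (hyP.2.trans_lt this) (not_lt.2 hlevel.le)
  have hp₁ : p.1 = 0 := hxP.trans (hG.pChain_c_zero_eq_zero hk hlevel.le)
  exact ⟨rfl, rfl, Prod.ext hp₁ (hG.qChain_c_zero_eq_zero_iff.1 (hxQ.symm.trans hp₁))⟩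

theorem eq_of_isCrossing (hG : TwoDescendingPaths G h t b P Q n m) {D : ReebDrawing G h}
    (hxP : ∀ k ≤ n, D.x (P k) = hG.pChain.u k) (hxQ : ∀ k ≤ m, D.x (Q k) = hG.qChain.u k)
    (hP : ∀ k < n, D.edgeCurve (P k) (P (k + 1)) = hG.pChain.arc k)
    (hQ : ∀ k < m, D.edgeCurve (Q k) (Q (k + 1)) = hG.qChain.arc k)
    {p : ℝ × ℝ} {v w v' w' : V} (hc : D.IsCrossing p v w v' w') :
    s(s(v, w), s(v', w')) = s(s(P 0, P 1), s(Q 0, Q 1)) ∧ p = (0, hG.crossHeight) := by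
  have hp := hc.2.2.2.1
  have hp' := hc.2.2.2.2.1
  rcases (hG.adj_iff v w).1 hc.1 with ⟨k, hk, he⟩ | ⟨k, hk, he⟩ <;>
    rcases (hG.adj_iff v' w').1 hc.2.1 with ⟨l, hl, he'⟩ | ⟨l, hl, he'⟩
  · refine absurd hc (D.not_isCrossing_of_inStrips hG.pChain_inStrips (fun j hj => ?_) hP
      hk hl he he')
    rw [ReebDrawing.pos, hxP j hj]
    rfl
  · rw [← D.edgeCurve_congr he, hP k hk] at hp
    rw [← D.edgeCurve_congr he', hQ l hl] at hp'
    obtain ⟨rfl, rfl, rfl⟩ := hG.eq_of_mem_pChain_arc_of_mem_qChain_arc hk hl hp hp'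
    exact ⟨by rw [← he, ← he'], rfl⟩
  · rw [← D.edgeCurve_congr he, hQ k hk] at hp
    rw [← D.edgeCurve_congr he', hP l hl] at hp'
    obtain ⟨rfl, rfl, rfl⟩ := hG.eq_of_mem_pChain_arc_of_mem_qChain_arc hl hk hp' hp
    exact ⟨by rw [← he, ← he', Sym2.eq_swap], rfl⟩
  · refine absurd hc (D.not_isCrossing_of_inStrips hG.qChain_inStrips (fun j hj => ?_) hQ
      hk hl he he')
    rw [ReebDrawing.pos, hxQ j hj]
    rfl

theorem exists_drawing (hG : TwoDescendingPaths G h t b P Q n m) :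
    ∃ D : ReebDrawing G h, D.x (P 0) < D.x (Q 0) ∧ D.x (Q m) < D.x (P n) ∧ D.numCrossings = 1 := by
  have hn := hG.descends_P.n_pos hG.bot_lt_top
  have hm := hG.descends_Q.n_pos hG.bot_lt_top
  obtain ⟨D, hxP, hxQ, hP, hQ⟩ := hG.exists_drawing_of_chains hG.pChain hG.qChain rfl rfl
    (fun _ => rfl) (fun _ => rfl) hG.pChain_strictMonoOn.injOn hG.qChain_strictAntiOn.injOn
    fun i hi _ _ => hG.pChain_u_ne_qChain_u hi
  obtain ⟨hlevel, htop⟩ := hG.crossHeight_mem_Ioo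
  have hcross : ((0 : ℝ), hG.crossHeight) ∈ hG.pChain.arc 0 ∩ hG.qChain.arc 0 := by
    refine ⟨⟨?_, (hG.pChain_c_zero_eq_zero hn hlevel.le).symm⟩,
      ⟨?_, (hG.qChain_c_zero_eq_zero_iff.2 rfl).symm⟩⟩
    · have := hG.lt_level_P one_pos hn
      exact mem_uIcc.2 (.inr ⟨show h (P 1) ≤ _ by linarith,
        by simp [pChain, hG.descends_P.start, htop.le]⟩)
    · have := hG.lt_level_Q one_pos hm
      exact mem_uIcc.2 (.inr ⟨show h (Q 1) ≤ _ by linarith,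
        by simp [qChain, hG.descends_Q.start, htop.le]⟩)
  refine ⟨D, ?_, ?_, D.numCrossings_eq_one
    (hG.isCrossing_of_mem D hn hm (hP 0 hn ▸ hcross.1) (hQ 0 hm ▸ hcross.2))
    fun _ _ _ _ _ => hG.eq_of_isCrossing hxP hxQ hP hQ⟩
  · rw [hxP 0 (Nat.zero_le n), hxQ 0 (Nat.zero_le m)]
    simp only [pChain, qChain, qPos, if_pos, Nat.cast_zero]
    positivity
  · rw [hxP n le_rfl, hxQ m le_rfl]
    simp only [pChain, qChain, qPos, if_neg hm.ne']
    linarith [(Nat.cast_nonneg n : (0 : ℝ) ≤ n), (Nat.cast_pos.2 hm : (0 : ℝ) < m)]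

end TwoDescendingPaths

theorem twoDescendingPaths_of_fin {V : Type*} {G : SimpleGraph V} {h : V → ℝ} {b t : ℝ}
    (hbt : b < t) {p q : ℕ} (hp : 2 ≤ p) (hq : 2 ≤ q) {r : Fin p → V} {g : Fin q → V}
    (hrinj : Function.Injective r) (hginj : Function.Injective g) (hdisj : ∀ i j, r i ≠ g j)
    (hcover : ∀ v : V, (∃ i, r i = v) ∨ (∃ j, g j = v))
    (hadj : ∀ a c : V, G.Adj a c ↔
      ((∃ (i : ℕ) (hi : i + 1 < p),
          s(r ⟨i, Nat.lt_of_succ_lt hi⟩, r ⟨i + 1, hi⟩) = s(a, c)) ∨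
       (∃ (j : ℕ) (hj : j + 1 < q),
          s(g ⟨j, Nat.lt_of_succ_lt hj⟩, g ⟨j + 1, hj⟩) = s(a, c))))
    (hne : ∀ v w : V, G.Adj v w → h v ≠ h w)
    (hrt : h (r ⟨0, zero_lt_two.trans_le hp⟩) = t)
    (hrb : h (r ⟨p - 1, Nat.sub_lt (zero_lt_two.trans_le hp) one_pos⟩) = b)
    (hgb : h (g ⟨0, zero_lt_two.trans_le hq⟩) = b)
    (hgt : h (g ⟨q - 1, Nat.sub_lt (zero_lt_two.trans_le hq) one_pos⟩) = t)
    (hrint : ∀ i : Fin p, 0 < i.val → i.val < p - 1 → h (r i) ∈ Set.Ioo b t)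
    (hgint : ∀ j : Fin q, 0 < j.val → j.val < q - 1 → h (g j) ∈ Set.Ioo b t) :
    TwoDescendingPaths G h t b (fun k => r ⟨min k (p - 1), by omega⟩)
      (fun k => g ⟨q - 1 - k, by omega⟩) (p - 1) (q - 1) := by
  have hr : ∀ k (hk : k < p), r ⟨min k (p - 1), by omega⟩ = r ⟨k, hk⟩ :=
    fun k hk => congrArg r (Fin.ext (min_eq_left (by omega)))
  have hg : ∀ k (hk : k < q), g ⟨q - 1 - (q - 1 - k), by omega⟩ = g ⟨k, hk⟩ :=
    fun k hk => congrArg g (Fin.ext (by simp only; omega))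
  refine ⟨hbt, fun v w => ?_, hne, ⟨?_, ?_, fun k hk hkp => ?_⟩, ⟨hgt, ?_, fun k hk hkq => ?_⟩,
    fun i hi j hj he => ?_, fun i hi j hj he => ?_, fun i j => hdisj _ _, fun v => ?_⟩
  · rw [hadj]
    constructor
    · rintro (⟨i, hi, he⟩ | ⟨j, hj, he⟩)
      · exact .inl ⟨i, by omega, by rwa [hr i (by omega), hr (i + 1) hi]⟩
      · refine .inr ⟨q - 2 - j, by omega, ?_⟩
        rw [← he, Sym2.eq_swap]
        congr 2 <;> simp only [Fin.mk.injEq] <;> omega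
    · rintro (⟨k, hk, he⟩ | ⟨k, hk, he⟩)
      · exact .inl ⟨k, by omega, by rwa [← hr k (by omega), ← hr (k + 1) (by omega)]⟩
      · refine .inr ⟨q - 2 - k, by omega, ?_⟩
        rw [← he, Sym2.eq_swap]
        congr 2 <;> simp only [Fin.mk.injEq] <;> omega
  · exact hrt
  · simpa only [min_self] using hrb
  · rw [hr k (by omega)]
    exact hrint _ hk hkp
  · simpa only [Nat.sub_self] using hgb
  · exact hgint _ (show 0 < q - 1 - k by omega) (show q - 1 - k < q - 1 by omega)
  · rw [mem_Iic] at hi hj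
    rw [hr i (by omega), hr j (by omega)] at he
    exact Fin.mk.inj_iff.1 (hrinj he)
  · rw [mem_Iic] at hi hj
    have := Fin.mk.inj_iff.1 (hginj he)
    omega
  · rcases hcover v with ⟨i, rfl⟩ | ⟨j, rfl⟩
    · exact .inl ⟨i, by omega, hr i i.2⟩
    · exact .inr ⟨q - 1 - j, by omega, hg j j.2⟩

/-- Let `b < t` be real numbers, let `t₁ = r 0` and `t₂ = g (q-1)`
be vertices of height `t`, and `b₁ = g 0` and `b₂ = r (p-1)` be vertices of height
`b`. Let `r` be a path from `t₁` to `b₂` and `g` a vertex-disjoint path from `b₁` to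
`t₂`, such that every interior vertex of `r` and of `g` has height strictly between
`b` and `t` (and, the paths being part of a Reeb graph, adjacent vertices have
distinct heights). Then the Reeb graph consisting of the two paths `r` and `g`
admits a drawing, respecting the endpoint placements (`t₁` left of `t₂` and `b₁`
left of `b₂`), with exactly one crossing; and every drawing respecting these
placements has at least one crossing. -/
theorem two_paths_one_crossing
    {V : Type*} (G : SimpleGraph V) (h : V → ℝ)
    (b t : ℝ) (hbt : b < t)
    (p q : ℕ) (hp : 2 ≤ p) (hq : 2 ≤ q)
    (r : Fin p → V) (g : Fin q → V)
    (hrinj : Function.Injective r) (hginj : Function.Injective g)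
    (hdisj : ∀ i j, r i ≠ g j)
    (hcover : ∀ v : V, (∃ i, r i = v) ∨ (∃ j, g j = v))
    (hadj : ∀ a c : V, G.Adj a c ↔
      ((∃ (i : ℕ) (hi : i + 1 < p),
          s(r ⟨i, Nat.lt_of_succ_lt hi⟩, r ⟨i + 1, hi⟩) = s(a, c)) ∨
       (∃ (j : ℕ) (hj : j + 1 < q),
          s(g ⟨j, Nat.lt_of_succ_lt hj⟩, g ⟨j + 1, hj⟩) = s(a, c))))
    (hne : ∀ v w : V, G.Adj v w → h v ≠ h w)
    (hrt : h (r ⟨0, by omega⟩) = t) (hrb : h (r ⟨p - 1, by omega⟩) = b)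
    (hgb : h (g ⟨0, by omega⟩) = b) (hgt : h (g ⟨q - 1, by omega⟩) = t)
    (hrint : ∀ i : Fin p, 0 < i.val → i.val < p - 1 → h (r i) ∈ Set.Ioo b t)
    (hgint : ∀ j : Fin q, 0 < j.val → j.val < q - 1 → h (g j) ∈ Set.Ioo b t) :
    (∃ D : ReebDrawing G h,
        D.x (r ⟨0, by omega⟩) < D.x (g ⟨q - 1, by omega⟩) ∧
        D.x (g ⟨0, by omega⟩) < D.x (r ⟨p - 1, by omega⟩) ∧
        D.numCrossings = 1) ∧
    (∀ D : ReebDrawing G h,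
        D.x (r ⟨0, by omega⟩) < D.x (g ⟨q - 1, by omega⟩) →
        D.x (g ⟨0, by omega⟩) < D.x (r ⟨p - 1, by omega⟩) →
        1 ≤ D.numCrossings) := by
  have hG := twoDescendingPaths_of_fin hbt hp hq hrinj hginj hdisj hcover hadj hne hrt hrb hgb hgt
    hrint hgint
  have hR : r ⟨min (p - 1) (p - 1), by omega⟩ = r ⟨p - 1, by omega⟩ :=
    congrArg r (Fin.ext (min_self _))
  have hB : g ⟨q - 1 - (q - 1), by omega⟩ = g ⟨0, by omega⟩ := congrArg g (Fin.ext (Nat.sub_self _))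
  obtain ⟨D, htop, hbot, hD⟩ := hG.exists_drawing
  exact ⟨⟨D, htop, by rwa [hR, hB] at hbot, hD⟩,
    fun D htop hbot => hG.one_le_numCrossings D htop (by rwa [hR, hB])⟩
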